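/- Let w ∈ ℂ with 0 < |w| ≤ 1, Im w ≥ 0 and w ≠ −1, and set z := i(1 − w)/(1 + w), S := |z + i| and S₋ := |z − i|. Then S = 2/|1 + w| and S₋ = |w|·S, the quantities (S + S₋)² − 4 and 4 − (S − S₋)² are both nonnegative, and the Forgács–Horváth–Palla expressions T₁ := (1/(2S⁵))·√((S + S₋)² − 4)·( (1/4)·(4 − (S − S₋)²)² + S²S₋² − 3(z + z̄)² ) and T₂ := (1/(2S⁵))·√(4 − (S − S₋)²)·( (1/4)·(4 − (S + S₋)²)² + S²S₋² − 3(z + z̄)² ) satisfy T₁ = Im(w^{5/2}) and T₂ = Re(w^{5/2}), where w^{5/2} := exp((5/2)·Log w) is taken with the principal branch of the logarithm (argument in [0, π]). -/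

import Mathlib

/-!
Put u := w^{1/2} (principal branch); since Im w ≥ 0, u lies in the closed first quadrant and
w^{5/2} = u⁵. The map z = i(1 − w)/(1 + w) gives z + i = 2i/(1 + w) and z − i = −w(z + i), so
every quantity in T₁, T₂ is S² times a function of w alone: the radicands are 2S²(|w| ∓ Re w) and
Re(z + z̄) = S² Im w. The powers of S cancel, and with |w| ∓ Re w = 2(Im u)², 2(Re u)² and
Im w = 2 Re u Im u, T₁ and T₂ become the quintic polynomials Im u⁵ and Re u⁵.
-/

open Complex ComplexConjugate

noncomputable section

/-- The conformal equivalence from the unit-disc model to the upper half-plane model: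
z = i(1 − w)/(1 + w). -/
def z19 (w : ℂ) : ℂ := Complex.I * (1 - w) / (1 + w)

/-- S = |z + i|. -/
def S19 (w : ℂ) : ℝ := ‖z19 w + Complex.I‖

/-- S₋ = |z − i|. -/
def Sm19 (w : ℂ) : ℝ := ‖z19 w - Complex.I‖

/-- The Forgács–Horváth–Palla expression
T₁ = (1/(2S⁵))·√((S+S₋)²−4)·((1/4)(4−(S−S₋)²)² + S²S₋² − 3(z+z̄)²). -/
def T1 (w : ℂ) : ℝ :=
  (1 / (2 * (S19 w)^5)) * Real.sqrt ((S19 w + Sm19 w)^2 - 4) *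
    ((1/4) * (4 - (S19 w - Sm19 w)^2)^2 + (S19 w)^2 * (Sm19 w)^2 -
      3 * ((z19 w + conj (z19 w)).re)^2)

/-- The Forgács–Horváth–Palla expression
T₂ = (1/(2S⁵))·√(4−(S−S₋)²)·((1/4)(4−(S+S₋)²)² + S²S₋² − 3(z+z̄)²). -/
def T2 (w : ℂ) : ℝ :=
  (1 / (2 * (S19 w)^5)) * Real.sqrt (4 - (S19 w - Sm19 w)^2) *
    ((1/4) * (4 - (S19 w + Sm19 w)^2)^2 + (S19 w)^2 * (Sm19 w)^2 -
      3 * ((z19 w + conj (z19 w)).re)^2)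

section UpperHalfPlaneMap

variable {w : ℂ}

lemma z19_add_I (hw : 1 + w ≠ 0) : z19 w + I = 2 * I / (1 + w) := by
  rw [z19]; field_simp; ring

lemma z19_sub_I (hw : 1 + w ≠ 0) : z19 w - I = -(w * (z19 w + I)) := by
  rw [z19_add_I hw, z19]; field_simp; ring

lemma S19_eq (hw : 1 + w ≠ 0) : S19 w = 2 / ‖1 + w‖ := by
  simp [S19, z19_add_I hw]

lemma Sm19_eq (hw : 1 + w ≠ 0) : Sm19 w = ‖w‖ * S19 w := by
  rw [Sm19, z19_sub_I hw, norm_neg, norm_mul, S19]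

lemma S19_pos (hw : 1 + w ≠ 0) : 0 < S19 w := by
  rw [S19_eq hw]; positivity

lemma S19_sq_mul_normSq (hw : 1 + w ≠ 0) : S19 w ^ 2 * (1 + 2 * w.re + ‖w‖ ^ 2) = 4 := by
  have hn : ‖1 + w‖ ^ 2 = 1 + 2 * w.re + ‖w‖ ^ 2 := by
    simp only [Complex.sq_norm, normSq_apply, add_re, add_im, one_re, one_im]; ring
  rw [S19_eq hw, ← hn]
  field_simp
  norm_num

lemma S19_add_Sm19_sq_sub_four (hw : 1 + w ≠ 0) :
    (S19 w + Sm19 w) ^ 2 - 4 = 2 * S19 w ^ 2 * (‖w‖ - w.re) := by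
  rw [Sm19_eq hw]
  linear_combination S19_sq_mul_normSq hw

lemma four_sub_S19_sub_Sm19_sq (hw : 1 + w ≠ 0) :
    4 - (S19 w - Sm19 w) ^ 2 = 2 * S19 w ^ 2 * (‖w‖ + w.re) := by
  rw [Sm19_eq hw]
  linear_combination (-1 : ℝ) * S19_sq_mul_normSq hw

lemma re_z19_add_conj (hw : 1 + w ≠ 0) : (z19 w + conj (z19 w)).re = S19 w ^ 2 * w.im := by
  have hz : z19 w = 2 * I / (1 + w) - I := by linear_combination z19_add_I hw
  rw [add_conj, ofReal_re, hz, S19_eq hw, div_pow, Complex.sq_norm]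
  simp [div_re, field]

lemma sqrt_two_mul_S19_sq_mul (hw : 1 + w ≠ 0) (x : ℝ) :
    √(2 * S19 w ^ 2 * x) = S19 w * √(2 * x) := by
  rw [mul_right_comm, Real.sqrt_mul' _ (sq_nonneg _), Real.sqrt_sq (S19_pos hw).le, mul_comm]

lemma T1_eq (hw : 1 + w ≠ 0) :
    T1 w = √(2 * (‖w‖ - w.re)) / 2 * ((‖w‖ + w.re) ^ 2 + ‖w‖ ^ 2 - 3 * w.im ^ 2) := by
  have := (S19_pos hw).ne'
  rw [T1, S19_add_Sm19_sq_sub_four hw, four_sub_S19_sub_Sm19_sq hw, Sm19_eq hw,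
    re_z19_add_conj hw, sqrt_two_mul_S19_sq_mul hw]
  field_simp
  ring

lemma T2_eq (hw : 1 + w ≠ 0) :
    T2 w = √(2 * (‖w‖ + w.re)) / 2 * ((‖w‖ - w.re) ^ 2 + ‖w‖ ^ 2 - 3 * w.im ^ 2) := by
  have := (S19_pos hw).ne'
  have hrad : 4 - (S19 w + Sm19 w) ^ 2 = -(2 * S19 w ^ 2 * (‖w‖ - w.re)) := by
    linear_combination -S19_add_Sm19_sq_sub_four hw
  rw [T2, hrad, four_sub_S19_sub_Sm19_sq hw, Sm19_eq hw,
    re_z19_add_conj hw, sqrt_two_mul_S19_sq_mul hw]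
  field_simp
  ring

end UpperHalfPlaneMap

lemma norm_pow_two_eq (u : ℂ) : ‖u ^ 2‖ = u.re ^ 2 + u.im ^ 2 := by
  rw [norm_pow, Complex.sq_norm, normSq_apply]; ring

lemma pow_two_re (u : ℂ) : (u ^ 2).re = u.re ^ 2 - u.im ^ 2 := by
  rw [sq, mul_re]; ring

lemma pow_two_im (u : ℂ) : (u ^ 2).im = 2 * u.re * u.im := by
  rw [sq, mul_im]; ring

lemma fhp_im_eq_im_pow_five {u : ℂ} (hu : 0 ≤ u.im) :
    √(2 * (‖u ^ 2‖ - (u ^ 2).re)) / 2 *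
      ((‖u ^ 2‖ + (u ^ 2).re) ^ 2 + ‖u ^ 2‖ ^ 2 - 3 * (u ^ 2).im ^ 2) = (u ^ 5).im := by
  rw [show u ^ 5 = u ^ 2 * u ^ 2 * u by ring]
  simp only [mul_re, mul_im, norm_pow_two_eq, pow_two_re, pow_two_im]
  rw [
    show 2 * (u.re ^ 2 + u.im ^ 2 - (u.re ^ 2 - u.im ^ 2)) = (2 * u.im) ^ 2 by ring,
    Real.sqrt_sq (by positivity)]
  ring

lemma fhp_re_eq_re_pow_five {u : ℂ} (hu : 0 ≤ u.re) :
    √(2 * (‖u ^ 2‖ + (u ^ 2).re)) / 2 *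
      ((‖u ^ 2‖ - (u ^ 2).re) ^ 2 + ‖u ^ 2‖ ^ 2 - 3 * (u ^ 2).im ^ 2) = (u ^ 5).re := by
  rw [show u ^ 5 = u ^ 2 * u ^ 2 * u by ring]
  simp only [mul_re, mul_im, norm_pow_two_eq, pow_two_re, pow_two_im]
  rw [
    show 2 * (u.re ^ 2 + u.im ^ 2 + (u.re ^ 2 - u.im ^ 2)) = (2 * u.re) ^ 2 by ring,
    Real.sqrt_sq (by positivity)]
  ring

theorem fhp_T_identities_general (w : ℂ)
    (h3 : 0 ≤ w.im) (h4 : w ≠ -1) :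
    S19 w = 2 / ‖1 + w‖ ∧
    Sm19 w = ‖w‖ * S19 w ∧
    0 ≤ (S19 w + Sm19 w)^2 - 4 ∧
    0 ≤ 4 - (S19 w - Sm19 w)^2 ∧
    T1 w = (w ^ ((5 : ℂ)/2)).im ∧
    T2 w = (w ^ ((5 : ℂ)/2)).re := by
  set u := w ^ (2⁻¹ : ℂ)
  have hu_sq : w = u ^ 2 := (cpow_ofNat_inv_pow w 2).symm
  have hpow : w ^ ((5 : ℂ) / 2) = u ^ 5 := by
    rw [div_eq_mul_inv, mul_comm, cpow_mul_ofNat]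
  have hu_re : 0 ≤ u.re := by rw [cpow_inv_two_re]; positivity
  have hu_im : 0 ≤ u.im := by rw [cpow_inv_two_im_eq_sqrt h3]; positivity
  have hw : 1 + w ≠ 0 := fun h => h4 (eq_neg_of_add_eq_zero_right h)
  refine ⟨S19_eq hw, Sm19_eq hw, ?_, ?_, ?_, ?_⟩
  · rw [S19_add_Sm19_sq_sub_four hw]
    exact mul_nonneg (by positivity) (sub_nonneg.mpr (re_le_norm w))
  · rw [four_sub_S19_sub_Sm19_sq hw]
    exact mul_nonneg (by positivity) (by linarith [neg_le_of_abs_le (abs_re_le_norm w)])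
  · rw [T1_eq hw, hpow, ← fhp_im_eq_im_pow_five hu_im, ← hu_sq]
  · rw [T2_eq hw, hpow, ← fhp_re_eq_re_pow_five hu_re, ← hu_sq]

/-- For w in the closed upper half-disc (punctured at 0, with w ≠ −1), setting
z = i(1−w)/(1+w), S = |z+i| and S₋ = |z−i|, one has S = 2/|1+w|, S₋ = |w|S, the radicands
(S+S₋)²−4 and 4−(S−S₋)² are nonnegative, and the Forgács–Horváth–Palla expressions satisfy
T₁ = Im(w^{5/2}) and T₂ = Re(w^{5/2}) for the principal branch of w^{5/2}. -/
theorem fhp_T_identities (w : ℂ) (h1 : 0 < ‖w‖) (h2 : ‖w‖ ≤ 1)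
    (h3 : 0 ≤ w.im) (h4 : w ≠ -1) :
    S19 w = 2 / ‖1 + w‖ ∧
    Sm19 w = ‖w‖ * S19 w ∧
    0 ≤ (S19 w + Sm19 w)^2 - 4 ∧
    0 ≤ 4 - (S19 w - Sm19 w)^2 ∧
    T1 w = (w ^ ((5 : ℂ)/2)).im ∧
    T2 w = (w ^ ((5 : ℂ)/2)).re :=
  fhp_T_identities_general w h3 h4
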